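/- If φ is an automorphism of the unit disc, then the spectral radius of the composition operator C_φ on the Bloch space equals 1. -/

import Mathlib

open Complex Metric Set Filter MeasureTheory Finset

noncomputable section

/-- The open unit disc in ℂ. -/
def D1 : Set ℂ := Metric.ball 0 1

/-- Analytic (holomorphic) on the open unit disc. -/
def AnalyticOnD (f : ℂ → ℂ) : Prop := DifferentiableOn ℂ f D1

/-- Bloch seminorm. -/
def blochSemi (f : ℂ → ℂ) : ℝ := ⨆ z : D1, (1 - ‖(z : ℂ)‖ ^ 2) * ‖deriv f (z : ℂ)‖

/-- Bloch norm. -/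
def blochNorm (f : ℂ → ℂ) : ℝ := ‖f 0‖ + blochSemi f

/-- Membership in the Bloch space. -/
def InBloch (f : ℂ → ℂ) : Prop :=
  AnalyticOnD f ∧ ∃ C, ∀ z ∈ D1, (1 - ‖z‖ ^ 2) * ‖deriv f z‖ ≤ C

/-- Sup norm over the unit disc. -/
def supNormD (f : ℂ → ℂ) : ℝ := ⨆ z : D1, ‖f (z : ℂ)‖

/-- Weighted composition operator uC_φ. -/
def wco (u φ : ℂ → ℂ) (f : ℂ → ℂ) : ℂ → ℂ := fun z => u z * f (φ z)

/-- Multiplication operator M_u. -/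
def mult (u : ℂ → ℂ) (f : ℂ → ℂ) : ℂ → ℂ := fun z => u z * f z

/-- The weight u_{(n)} = ∏_{j=0}^{n-1} u ∘ φ_j. -/
def wprod (u φ : ℂ → ℂ) (n : ℕ) : ℂ → ℂ := fun z => ∏ j ∈ Finset.range n, u (φ^[j] z)

/-- Boundedness of an operator on the Bloch space. -/
def BddOnBloch (T : (ℂ → ℂ) → (ℂ → ℂ)) : Prop :=
  ∃ C, ∀ f, InBloch f → InBloch (T f) ∧ blochNorm (T f) ≤ C * blochNorm f

/-- Operator norm on the Bloch space. -/
def opNormB (T : (ℂ → ℂ) → (ℂ → ℂ)) : ℝ :=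
  sInf {C : ℝ | 0 ≤ C ∧ ∀ f, InBloch f → blochNorm (T f) ≤ C * blochNorm f}

/-- Invertibility of an operator on the Bloch space (bounded two-sided inverse). -/
def InvertibleOnBloch (T : (ℂ → ℂ) → (ℂ → ℂ)) : Prop :=
  BddOnBloch T ∧ ∃ S, BddOnBloch S ∧
    ∀ f, InBloch f → Set.EqOn (S (T f)) f D1 ∧ Set.EqOn (T (S f)) f D1

/-- Spectrum of an operator acting on the Bloch space. -/
def blochSpectrum (T : (ℂ → ℂ) → (ℂ → ℂ)) : Set ℂ :=
  {lam | ¬ InvertibleOnBloch (fun f z => lam * f z - T f z)}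

/-- Automorphism of the unit disc (Möbius form). -/
def IsDiscAuto (φ : ℂ → ℂ) : Prop :=
  ∃ lam a : ℂ, ‖lam‖ = 1 ∧ a ∈ D1 ∧ ∀ z, φ z = lam * (a - z) / (1 - (starRingEnd ℂ) a * z)

/-- Hyperbolic distance on the unit disc. -/
def hypDist (z w : ℂ) : ℝ :=
  (1 / 2) * Real.log ((1 + ‖(z - w) / (1 - (starRingEnd ℂ) z * w)‖) /
    (1 - ‖(z - w) / (1 - (starRingEnd ℂ) z * w)‖))

/-- The disc algebra A(𝔻). -/
def InDiscAlgebra (u : ℂ → ℂ) : Prop :=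
  ContinuousOn u (Metric.closedBall 0 1) ∧ AnalyticOnD u

/-- u is bounded away from zero on the unit disc. -/
def BoundedAwayFromZero (u : ℂ → ℂ) : Prop := ∃ δ > 0, ∀ z ∈ D1, δ ≤ ‖u z‖

/-- Parabolic automorphism with unique fixed point a on the unit circle (φ'(a)=1). -/
def IsParabolicAuto (φ : ℂ → ℂ) (a : ℂ) : Prop :=
  IsDiscAuto φ ∧ ‖a‖ = 1 ∧ φ a = a ∧ deriv φ a = 1 ∧
    ∀ w, ‖w‖ ≤ 1 → φ w = w → w = a

/-- Hyperbolic automorphism with attractive fixed point a and repulsive fixed point b. -/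
def IsHyperbolicAuto (φ : ℂ → ℂ) (a b : ℂ) : Prop :=
  IsDiscAuto φ ∧ ‖a‖ = 1 ∧ ‖b‖ = 1 ∧ a ≠ b ∧ φ a = a ∧ φ b = b ∧
    ∃ μ : ℝ, 0 < μ ∧ μ < 1 ∧ deriv φ a = (μ : ℂ)

/-- Square of the Dirichlet norm (normalized area measure on 𝔻). -/
def dirichletNormSq (f : ℂ → ℂ) : ℝ :=
  ‖f 0‖ ^ 2 + (1 / Real.pi) * ∫ z in D1, ‖deriv f z‖ ^ 2

/-- Dirichlet norm. -/
def dirichletNorm (f : ℂ → ℂ) : ℝ := Real.sqrt (dirichletNormSq f)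

/-- Membership in the Dirichlet space. -/
def InDirichlet (f : ℂ → ℂ) : Prop :=
  AnalyticOnD f ∧ MeasureTheory.IntegrableOn (fun z => ‖deriv f z‖ ^ 2) D1

/-- Boundedness of an operator on the Dirichlet space. -/
def BddOnDirichlet (T : (ℂ → ℂ) → (ℂ → ℂ)) : Prop :=
  ∃ C, ∀ f, InDirichlet f → InDirichlet (T f) ∧ dirichletNorm (T f) ≤ C * dirichletNorm f

/-- Operator norm on the Dirichlet space. -/
def opNormDir (T : (ℂ → ℂ) → (ℂ → ℂ)) : ℝ :=
  sInf {C : ℝ | 0 ≤ C ∧ ∀ f, InDirichlet f → dirichletNorm (T f) ≤ C * dirichletNorm f}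

/-- Invertibility of an operator on the Dirichlet space. -/
def InvertibleOnDirichlet (T : (ℂ → ℂ) → (ℂ → ℂ)) : Prop :=
  BddOnDirichlet T ∧ ∃ S, BddOnDirichlet S ∧
    ∀ f, InDirichlet f → Set.EqOn (S (T f)) f D1 ∧ Set.EqOn (T (S f)) f D1

/-- Spectrum of an operator on the Dirichlet space. -/
def dirichletSpectrum (T : (ℂ → ℂ) → (ℂ → ℂ)) : Set ℂ :=
  {lam | ¬ InvertibleOnDirichlet (fun f z => lam * f z - T f z)}

/-- Operator norm of M_{u'} : B → H^∞_{v₁}. -/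
def opNormBtoHv1 (u : ℂ → ℂ) : ℝ :=
  sInf {C : ℝ | 0 ≤ C ∧ ∀ f, InBloch f → ∀ z ∈ D1,
    (1 - ‖z‖ ^ 2) * ‖deriv u z * f z‖ ≤ C * blochNorm f}

/-- Operator norm of M_{u'} : 𝒟 → A². -/
def opNormDtoA2 (u : ℂ → ℂ) : ℝ :=
  sInf {C : ℝ | 0 ≤ C ∧ ∀ f, InDirichlet f →
    Real.sqrt ((1 / Real.pi) * ∫ z in D1, ‖deriv u z * f z‖ ^ 2) ≤ C * dirichletNorm f}

/-- The logarithmic weight log(e/(1-|z|²)). -/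
def logWeight (z : ℂ) : ℝ := Real.log (Real.exp 1 / (1 - ‖z‖ ^ 2))

/-- Characterization of multipliers of the Bloch space: u ∈ H^∞ and the log condition. -/
def MultBChar (u : ℂ → ℂ) : Prop :=
  (∃ M, ∀ z ∈ D1, ‖u z‖ ≤ M) ∧
  (∃ M, ∀ z ∈ D1, (1 - ‖z‖ ^ 2) * ‖deriv u z‖ * logWeight z ≤ M)


/-!
An automorphism satisfies the Schwarz–Pick identity `(1 - |z|²) |φ'(z)| = 1 - |φ(z)|²`, and the
corresponding inequality survives composition, so no iterate `C_{φₙ}` increases the Bloch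
seminorm. What remains is the point evaluation `f (φₙ 0)`: a Bloch function with seminorm `S`
grows at most like `S log (1 - |w|)⁻¹`, while `1 - |φ(z)|² ≥ c (1 - |z|²)` with
`c = (1 - |a|²) / 4` gives `1 - |φₙ(0)|² ≥ cⁿ`. Hence `1 ≤ ‖C_{φₙ}‖ ≤ 1 + log 2 + n log c⁻¹`
(the lower bound because `C_{φₙ}` fixes constants), and the `n`-th roots of these norms tend
to `1`.
-/

open scoped ComplexConjugate Topology

lemma mem_D1 {z : ℂ} : z ∈ D1 ↔ ‖z‖ < 1 := mem_ball_zero_iff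

lemma mem_D1_iff_one_sub_sq_norm_pos {z : ℂ} : z ∈ D1 ↔ 0 < 1 - ‖z‖ ^ 2 := by
  rw [mem_D1, sub_pos, pow_lt_one_iff_of_nonneg (norm_nonneg z) two_ne_zero]

lemma zero_mem_D1 : (0 : ℂ) ∈ D1 := by simp [mem_D1]

lemma isOpen_D1 : IsOpen D1 := isOpen_ball

instance : Nonempty D1 := ⟨⟨0, zero_mem_D1⟩⟩

lemma log_inv_one_sub_norm_nonneg {w : ℂ} (hw : w ∈ D1) : 0 ≤ Real.log (1 - ‖w‖)⁻¹ :=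
  Real.log_nonneg <| (one_le_inv₀ (by linarith [mem_D1.1 hw])).2 (by linarith [norm_nonneg w])

lemma hasDerivAt_apply_ofReal_mul {f : ℂ → ℂ} {w : ℂ} {t : ℝ}
    (hf : DifferentiableAt ℂ f (t * w)) :
    HasDerivAt (fun s : ℝ => f (s * w)) (w * deriv f (t * w)) t := by
  have hline : HasDerivAt (fun s : ℝ => (s : ℂ) * w) w t := by
    simpa using Complex.ofRealCLM.hasDerivAt.mul_const w
  exact hf.hasDerivAt.scomp t hline

section Bloch

variable {f : ℂ → ℂ}

lemma InBloch.le_blochSemi (hf : InBloch f) {z : ℂ} (hz : z ∈ D1) :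
    (1 - ‖z‖ ^ 2) * ‖deriv f z‖ ≤ blochSemi f := by
  obtain ⟨-, C, hC⟩ := hf
  exact le_ciSup (f := fun z : D1 => (1 - ‖(z : ℂ)‖ ^ 2) * ‖deriv f z‖)
    ⟨C, by rintro _ ⟨w, rfl⟩; exact hC w w.2⟩ ⟨z, hz⟩

/-- Compare `t ↦ f (t w) - f 0` on `[0, 1]` with `t ↦ S log (1 - t ‖w‖)⁻¹`, whose derivative
`S ‖w‖ / (1 - t ‖w‖)` dominates that of the former. -/
lemma InBloch.norm_sub_apply_zero_le (hf : InBloch f) {w : ℂ} (hw : w ∈ D1) :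
    ‖f w - f 0‖ ≤ blochSemi f * Real.log (1 - ‖w‖)⁻¹ := by
  set S := blochSemi f
  set r := ‖w‖
  have hr : r < 1 := mem_D1.1 hw
  have hr0 : 0 ≤ r := norm_nonneg w
  have hdenom : ∀ t ∈ Icc (0 : ℝ) 1, 0 < 1 - t * r := fun t ht => by nlinarith [ht.2]
  have hnorm : ∀ t ∈ Icc (0 : ℝ) 1, ‖(t : ℂ) * w‖ = t * r := fun t ht => by
    rw [norm_mul, Complex.norm_real, Real.norm_of_nonneg ht.1]
  have hmem : ∀ t ∈ Icc (0 : ℝ) 1, (t : ℂ) * w ∈ D1 := fun t ht => by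
    rw [mem_D1, hnorm t ht]; linarith [hdenom t ht]
  have hf' : ∀ t ∈ Icc (0 : ℝ) 1,
      HasDerivAt (fun t : ℝ => f (t * w) - f 0) (w * deriv f (t * w)) t := fun t ht =>
    (hasDerivAt_apply_ofReal_mul
      (hf.1.differentiableAt (isOpen_D1.mem_nhds (hmem t ht)))).sub_const (f 0)
  have hB : ∀ t ∈ Icc (0 : ℝ) 1,
      HasDerivAt (fun t : ℝ => S * -Real.log (1 - t * r)) (S * (r / (1 - t * r))) t :=
    fun t ht => by
      have hlog := (((hasDerivAt_id t).mul_const r).const_sub 1).log (hdenom t ht).ne'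
      refine (hlog.neg.const_mul S).congr_deriv ?_
      simp only [id, one_mul, neg_div, neg_neg]
  have hbound : ∀ t ∈ Icc (0 : ℝ) 1, ‖w * deriv f (t * w)‖ ≤ S * (r / (1 - t * r)) :=
    fun t ht => by
      have hweight : 1 - t * r ≤ 1 - (t * r) ^ 2 := by
        nlinarith [mul_nonneg ht.1 hr0, hdenom t ht]
      have hderiv : ‖deriv f (t * w)‖ * (1 - t * r) ≤ S :=
        calc ‖deriv f (t * w)‖ * (1 - t * r) ≤ (1 - (t * r) ^ 2) * ‖deriv f (t * w)‖ := by
              rw [mul_comm]; gcongr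
          _ ≤ S := hnorm t ht ▸ hf.le_blochSemi (hmem t ht)
      rw [norm_mul, mul_div_assoc', le_div_iff₀ (hdenom t ht), mul_assoc, mul_comm S]
      exact mul_le_mul_of_nonneg_left hderiv hr0
  have := image_norm_le_of_norm_deriv_right_le_deriv_boundary'
    (fun t ht => (hf' t ht).continuousAt.continuousWithinAt)
    (fun t ht => (hf' t (Ico_subset_Icc_self ht)).hasDerivWithinAt) (by simp)
    (fun t ht => (hB t ht).continuousAt.continuousWithinAt)
    (fun t ht => (hB t (Ico_subset_Icc_self ht)).hasDerivWithinAt)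
    (fun t ht => hbound t (Ico_subset_Icc_self ht)) (right_mem_Icc.2 zero_le_one)
  simpa [Real.log_inv] using this

end Bloch

lemma opNormB_le {T : (ℂ → ℂ) → (ℂ → ℂ)} {C : ℝ} (hC : 0 ≤ C)
    (hT : ∀ f, InBloch f → blochNorm (T f) ≤ C * blochNorm f) : opNormB T ≤ C :=
  csInf_le ⟨0, fun _ h => h.1⟩ ⟨hC, hT⟩

lemma inBloch_one : InBloch fun _ => 1 :=
  ⟨differentiableOn_const 1, 0, fun _ _ => by simp⟩

lemma blochNorm_one : blochNorm (fun _ => 1) = 1 := by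
  simp [blochNorm, blochSemi]

/-- Needs an upper bound for `T`, since otherwise `opNormB T = sInf ∅ = 0`. -/
lemma one_le_opNormB {T : (ℂ → ℂ) → (ℂ → ℂ)} (hT : T (fun _ => 1) = fun _ => 1)
    (hbdd : ∃ C, 0 ≤ C ∧ ∀ f, InBloch f → blochNorm (T f) ≤ C * blochNorm f) :
    1 ≤ opNormB T :=
  le_csInf hbdd fun _ ⟨_, hC⟩ => by simpa [hT, blochNorm_one] using hC _ inBloch_one

/-- By the Schwarz–Pick lemma every holomorphic self-map of the disc has this property; for
automorphisms the inequality is an equality. -/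
def IsSchwarzPickMap (φ : ℂ → ℂ) : Prop :=
  MapsTo φ D1 D1 ∧ DifferentiableOn ℂ φ D1 ∧
    ∀ z ∈ D1, (1 - ‖z‖ ^ 2) * ‖deriv φ z‖ ≤ 1 - ‖φ z‖ ^ 2

namespace IsSchwarzPickMap

variable {φ ψ : ℂ → ℂ}

lemma mul_norm_deriv_comp_le (hφ : IsSchwarzPickMap φ) {g : ℂ → ℂ}
    (hg : DifferentiableOn ℂ g D1) {z : ℂ} (hz : z ∈ D1) :
    (1 - ‖z‖ ^ 2) * ‖deriv (g ∘ φ) z‖ ≤ (1 - ‖φ z‖ ^ 2) * ‖deriv g (φ z)‖ := by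
  obtain ⟨hmaps, hdiff, hweight⟩ := hφ
  rw [deriv_comp z (hg.differentiableAt (isOpen_D1.mem_nhds (hmaps hz)))
    (hdiff.differentiableAt (isOpen_D1.mem_nhds hz)), norm_mul]
  calc (1 - ‖z‖ ^ 2) * (‖deriv g (φ z)‖ * ‖deriv φ z‖)
      = ‖deriv g (φ z)‖ * ((1 - ‖z‖ ^ 2) * ‖deriv φ z‖) := by ring
    _ ≤ ‖deriv g (φ z)‖ * (1 - ‖φ z‖ ^ 2) := by gcongr; exact hweight z hz
    _ = (1 - ‖φ z‖ ^ 2) * ‖deriv g (φ z)‖ := mul_comm _ _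

lemma id : IsSchwarzPickMap id :=
  ⟨mapsTo_id D1, differentiableOn_id, fun z _ => by simp⟩

lemma comp (hψ : IsSchwarzPickMap ψ) (hφ : IsSchwarzPickMap φ) : IsSchwarzPickMap (ψ ∘ φ) :=
  ⟨hψ.1.comp hφ.1, hψ.2.1.comp hφ.2.1 hφ.1, fun z hz =>
    (hφ.mul_norm_deriv_comp_le hψ.2.1 hz).trans (hψ.2.2 (φ z) (hφ.1 hz))⟩

lemma iterate (hφ : IsSchwarzPickMap φ) (n : ℕ) : IsSchwarzPickMap φ^[n] := by
  induction n with
  | zero => exact IsSchwarzPickMap.id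
  | succ n ih => rw [Function.iterate_succ']; exact hφ.comp ih

lemma blochSemi_comp_le (hφ : IsSchwarzPickMap φ) {f : ℂ → ℂ} (hf : InBloch f) :
    blochSemi (f ∘ φ) ≤ blochSemi f :=
  ciSup_le fun z => (hφ.mul_norm_deriv_comp_le hf.1 z.2).trans (hf.le_blochSemi (hφ.1 z.2))

lemma blochNorm_comp_le (hφ : IsSchwarzPickMap φ) {f : ℂ → ℂ} (hf : InBloch f) :
    blochNorm (f ∘ φ) ≤ (1 + Real.log (1 - ‖φ 0‖)⁻¹) * blochNorm f := by
  set L := Real.log (1 - ‖φ 0‖)⁻¹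
  have hφ0 : φ 0 ∈ D1 := hφ.1 zero_mem_D1
  have hval : ‖f (φ 0)‖ ≤ ‖f 0‖ + blochSemi f * L :=
    (norm_le_insert' _ _).trans (add_le_add_right (hf.norm_sub_apply_zero_le hφ0) _)
  calc blochNorm (f ∘ φ) ≤ ‖f 0‖ + blochSemi f * L + blochSemi f :=
        add_le_add hval (hφ.blochSemi_comp_le hf)
    _ ≤ (1 + L) * blochNorm f := by
        rw [blochNorm]
        linarith [mul_nonneg (log_inv_one_sub_norm_nonneg hφ0) (norm_nonneg (f 0))]

lemma opNormB_comp_le (hφ : IsSchwarzPickMap φ) :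
    opNormB (fun f => f ∘ φ) ≤ 1 + Real.log (1 - ‖φ 0‖)⁻¹ :=
  opNormB_le (by linarith [log_inv_one_sub_norm_nonneg (hφ.1 zero_mem_D1)])
    fun _ hf => hφ.blochNorm_comp_le hf

lemma one_le_opNormB_comp (hφ : IsSchwarzPickMap φ) : 1 ≤ opNormB (fun f => f ∘ φ) :=
  one_le_opNormB rfl ⟨_, by linarith [log_inv_one_sub_norm_nonneg (hφ.1 zero_mem_D1)],
    fun _ hf => hφ.blochNorm_comp_le hf⟩

end IsSchwarzPickMap

lemma pow_mul_le_one_sub_sq_norm_iterate {φ : ℂ → ℂ} {c : ℝ} (hc : 0 ≤ c)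
    (hmaps : MapsTo φ D1 D1) (h : ∀ z ∈ D1, c * (1 - ‖z‖ ^ 2) ≤ 1 - ‖φ z‖ ^ 2)
    (n : ℕ) {z : ℂ} (hz : z ∈ D1) : c ^ n * (1 - ‖z‖ ^ 2) ≤ 1 - ‖φ^[n] z‖ ^ 2 := by
  induction n with
  | zero => simp
  | succ n ih =>
    rw [Function.iterate_succ_apply', pow_succ', mul_assoc]
    exact (mul_le_mul_of_nonneg_left ih hc).trans (h _ (hmaps.iterate n hz))

section Mobius

variable {lam a z : ℂ}

lemma one_sub_conj_mul_ne_zero (ha : a ∈ D1) (hz : z ∈ D1) : 1 - conj a * z ≠ 0 := by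
  refine sub_ne_zero.2 fun h => ?_
  have : ‖conj a * z‖ < 1 := by
    rw [norm_mul, RCLike.norm_conj]
    exact mul_lt_one_of_nonneg_of_lt_one_left (norm_nonneg a) (mem_D1.1 ha) (mem_D1.1 hz).le
  rw [← h, norm_one] at this
  exact lt_irrefl _ this

lemma norm_one_sub_conj_mul_le_two (ha : a ∈ D1) (hz : z ∈ D1) : ‖1 - conj a * z‖ ≤ 2 := by
  calc ‖1 - conj a * z‖ ≤ 1 + ‖a‖ * ‖z‖ := by
        simpa [norm_mul] using norm_sub_le (1 : ℂ) (conj a * z)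
    _ ≤ 2 := by nlinarith [norm_nonneg a, norm_nonneg z, mem_D1.1 ha, mem_D1.1 hz]

lemma sq_norm_one_sub_conj_mul_sub_sq_norm_sub (a z : ℂ) :
    ‖1 - conj a * z‖ ^ 2 - ‖a - z‖ ^ 2 = (1 - ‖a‖ ^ 2) * (1 - ‖z‖ ^ 2) := by
  apply Complex.ofReal_injective
  push_cast
  simp only [← Complex.mul_conj', map_sub, map_mul, map_one, Complex.conj_conj]
  ring

lemma one_sub_sq_norm_mobius (hlam : ‖lam‖ = 1) (h : 1 - conj a * z ≠ 0) :
    1 - ‖lam * (a - z) / (1 - conj a * z)‖ ^ 2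
      = (1 - ‖a‖ ^ 2) * (1 - ‖z‖ ^ 2) / ‖1 - conj a * z‖ ^ 2 := by
  rw [← sq_norm_one_sub_conj_mul_sub_sq_norm_sub, norm_div, norm_mul, hlam, one_mul, div_pow,
    sub_div, div_self (pow_ne_zero 2 (norm_ne_zero_iff.2 h))]

lemma hasDerivAt_mobius (h : 1 - conj a * z ≠ 0) :
    HasDerivAt (fun w => lam * (a - w) / (1 - conj a * w))
      (lam * ((‖a‖ ^ 2 - 1 : ℝ) : ℂ) / (1 - conj a * z) ^ 2) z := by
  have hnum : HasDerivAt (fun w => lam * (a - w)) (-lam) z := by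
    simpa using ((hasDerivAt_id z).const_sub a).const_mul lam
  have hden : HasDerivAt (fun w => 1 - conj a * w) (-conj a) z := by
    simpa using ((hasDerivAt_id z).const_mul (conj a)).const_sub 1
  refine (hnum.div hden h).congr_deriv ?_
  rw [div_eq_div_iff (pow_ne_zero 2 h) (pow_ne_zero 2 h)]
  push_cast
  linear_combination ((1 - conj a * z) ^ 2 * lam) * Complex.mul_conj' a

end Mobius

namespace IsDiscAuto

variable {φ : ℂ → ℂ}

lemma isSchwarzPickMap (hφ : IsDiscAuto φ) : IsSchwarzPickMap φ := by
  obtain ⟨lam, a, hlam, ha, hφ⟩ := hφ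
  obtain rfl : φ = fun z => lam * (a - z) / (1 - conj a * z) := funext hφ
  have hden : ∀ z ∈ D1, 1 - conj a * z ≠ 0 := fun z hz =>
    one_sub_conj_mul_ne_zero ha hz
  have ha' := mem_D1_iff_one_sub_sq_norm_pos.1 ha
  refine ⟨fun z hz => ?_, fun z hz => ?_, fun z hz => le_of_eq ?_⟩
  · rw [mem_D1_iff_one_sub_sq_norm_pos, one_sub_sq_norm_mobius hlam (hden z hz)]
    exact div_pos (mul_pos ha' (mem_D1_iff_one_sub_sq_norm_pos.1 hz))
      (pow_pos (norm_pos_iff.2 (hden z hz)) 2)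
  · exact (hasDerivAt_mobius (hden z hz)).differentiableAt.differentiableWithinAt
  · rw [(hasDerivAt_mobius (hden z hz)).deriv, one_sub_sq_norm_mobius hlam (hden z hz),
      norm_div, norm_mul, hlam, norm_pow, Complex.norm_real, Real.norm_of_nonpos (by linarith)]
    ring

lemma exists_pos_mul_le (hφ : IsDiscAuto φ) :
    ∃ c > 0, ∀ z ∈ D1, c * (1 - ‖z‖ ^ 2) ≤ 1 - ‖φ z‖ ^ 2 := by
  obtain ⟨lam, a, hlam, ha, hφ⟩ := hφ
  have ha' := mem_D1_iff_one_sub_sq_norm_pos.1 ha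
  refine ⟨(1 - ‖a‖ ^ 2) / 4, by positivity, fun z hz => ?_⟩
  have hden := one_sub_conj_mul_ne_zero ha hz
  have hsq : ‖1 - conj a * z‖ ^ 2 ≤ 4 := by
    nlinarith [norm_nonneg (1 - conj a * z), norm_one_sub_conj_mul_le_two ha hz]
  rw [hφ, one_sub_sq_norm_mobius hlam hden, div_mul_eq_mul_div, div_le_div_iff₀ (by norm_num)
    (pow_pos (norm_pos_iff.2 hden) 2)]
  exact mul_le_mul_of_nonneg_left hsq
    (mul_pos ha' (mem_D1_iff_one_sub_sq_norm_pos.1 hz)).le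

end IsDiscAuto

lemma Real.log_inv_one_sub_le {r c : ℝ} (hr : 0 ≤ r) (hc : 0 < c) (h : c ≤ 1 - r ^ 2) :
    Real.log (1 - r)⁻¹ ≤ Real.log 2 + Real.log c⁻¹ := by
  have hr1 : 0 < 1 - r := by nlinarith
  rw [← Real.log_mul two_ne_zero (inv_ne_zero hc.ne')]
  refine Real.log_le_log (inv_pos.2 hr1) ?_
  rw [← div_eq_mul_inv, inv_eq_one_div, div_le_div_iff₀ hr1 hc]
  nlinarith

lemma tendsto_rpow_one_div_of_le_add_mul {u : ℕ → ℝ} {A B : ℝ} (hA : 0 ≤ A)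
    (h1 : ∀ n, 1 ≤ u n) (h2 : ∀ n, u n ≤ A + B * n) :
    Tendsto (fun n : ℕ => u n ^ ((1 : ℝ) / n)) atTop (𝓝 1) := by
  have hAB : 0 < A + B := by simpa using zero_lt_one.trans_le ((h1 1).trans (h2 1))
  have hupper : Tendsto (fun n : ℕ => ((A + B) * n) ^ ((1 : ℝ) / n)) atTop (𝓝 1) := by
    have hconst : Tendsto (fun n : ℕ => (A + B) ^ ((1 : ℝ) / n)) atTop (𝓝 1) := by
      simpa using tendsto_const_nhds.rpow (tendsto_const_div_atTop_nhds_zero_nat 1)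
        (Or.inl hAB.ne')
    simpa using (hconst.mul (tendsto_rpow_div.comp tendsto_natCast_atTop_atTop)).congr
      fun n => (Real.mul_rpow hAB.le (Nat.cast_nonneg n)).symm
  refine tendsto_of_tendsto_of_tendsto_of_le_of_le' tendsto_const_nhds hupper
    (Eventually.of_forall fun n => Real.one_le_rpow (h1 n) (by positivity)) ?_
  filter_upwards [eventually_ge_atTop 1] with n hn
  have hn : (1 : ℝ) ≤ n := by exact_mod_cast hn
  exact Real.rpow_le_rpow (zero_le_one.trans (h1 n)) ((h2 n).trans (by nlinarith))
    (by positivity)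

/-- the spectral radius of C_φ on B equals 1 for automorphisms φ. -/
theorem stmt_10 (φ : ℂ → ℂ) (hφ : IsDiscAuto φ) :
    Filter.Tendsto (fun n : ℕ => opNormB (fun f => f ∘ φ^[n]) ^ ((1 : ℝ) / n))
      Filter.atTop (nhds 1) := by
  obtain ⟨c, hc, hweight⟩ := hφ.exists_pos_mul_le
  have hSP := hφ.isSchwarzPickMap
  refine tendsto_rpow_one_div_of_le_add_mul (A := 1 + Real.log 2) (B := Real.log c⁻¹)
    (by linarith [Real.log_nonneg one_le_two]) (fun n => (hSP.iterate n).one_le_opNormB_comp)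
    fun n => (hSP.iterate n).opNormB_comp_le.trans ?_
  have hcn : c ^ n ≤ 1 - ‖φ^[n] 0‖ ^ 2 := by
    simpa using pow_mul_le_one_sub_sq_norm_iterate hc.le hSP.1 hweight n zero_mem_D1
  have hlog := Real.log_inv_one_sub_le (norm_nonneg _) (pow_pos hc n) hcn
  rw [← inv_pow, Real.log_pow] at hlog
  linarith
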